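/- arXiv:2007.05340 — 9 statements merged into one kernel-verified Lean document; each statement's English description precedes it below -/
import Mathlib

section
/- Let r ≥ 1, let λ : Fin r → ℂ be pairwise distinct (injective), let ω : Fin r → ℂ satisfy ω i ≠ 0 for every i, and define the sequence y : ℕ → ℂ by y(k) = ∑_{i} ω i · (λ i)^k. Then the r×r Hankel matrix H of y, with entries H j k = y(j + k) for j, k ∈ Fin r, is invertible (equivalently, H has rank r). -/
/-!
A Hankel matrix of power sums factors as `Vᵀ * diagonal ω * V` with `V` the Vandermonde
matrix of the modes. Distinct modes make `V` invertible and nonzero weights make the diagonal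
factor invertible.
-/

open Matrix

namespace Matrix

theorem hankel_powerSum_eq_vandermonde {R : Type*} [CommRing R] {n : ℕ}
    (v w : Fin n → R) :
    of (fun j k : Fin n => ∑ i, w i * v i ^ ((j : ℕ) + k)) =
      (vandermonde v)ᵀ * diagonal w * vandermonde v := by
  ext j k
  rw [mul_apply]
  simp only [mul_diagonal, of_apply, transpose_apply, vandermonde_apply, pow_add]
  exact Finset.sum_congr rfl fun i _ => by ring

theorem isUnit_vandermonde_of_injective {K : Type*} [Field K] {n : ℕ} {v : Fin n → K}
    (hv : Function.Injective v) : IsUnit (vandermonde v) :=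
  (isUnit_iff_isUnit_det _).2 (det_vandermonde_ne_zero_iff.2 hv).isUnit

end Matrix

theorem hankel_invertible_of_distinct_simple_modes_general
    (r : ℕ)
    (lam : Fin r → ℂ) (hlam : Function.Injective lam)
    (ω : Fin r → ℂ) (hω : ∀ i, ω i ≠ 0)
    (y : ℕ → ℂ) (hy : ∀ k, y k = ∑ i, ω i * lam i ^ k)
    (H : Matrix (Fin r) (Fin r) ℂ)
    (hH : ∀ j k : Fin r, H j k = y ((j : ℕ) + (k : ℕ))) :
    IsUnit H := by
  have hfac : H = (vandermonde lam)ᵀ * diagonal ω * vandermonde lam := by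
    rw [← hankel_powerSum_eq_vandermonde lam ω]
    ext j k
    rw [hH, hy, of_apply]
  have hV := isUnit_vandermonde_of_injective hlam
  have hD : IsUnit (diagonal ω) := isUnit_diagonal.2 (Pi.isUnit_iff.2 fun i => (hω i).isUnit)
  rw [hfac]
  exact ((isUnit_transpose _).2 hV |>.mul hD).mul hV

theorem hankel_invertible_of_distinct_simple_modes
    (r : ℕ) (hr : 1 ≤ r)
    (lam : Fin r → ℂ) (hlam : Function.Injective lam)
    (ω : Fin r → ℂ) (hω : ∀ i, ω i ≠ 0)
    (y : ℕ → ℂ) (hy : ∀ k, y k = ∑ i, ω i * lam i ^ k)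
    (H : Matrix (Fin r) (Fin r) ℂ)
    (hH : ∀ j k : Fin r, H j k = y ((j : ℕ) + (k : ℕ))) :
    IsUnit H :=
  hankel_invertible_of_distinct_simple_modes_general r lam hlam ω hω y hy H hH
end

section
/- Let r ≥ 1, let λ : Fin r → ℂ be pairwise distinct (injective), let ω : Fin r → ℂ satisfy ω i ≠ 0 for every i, and define y : ℕ → ℂ by y(k) = ∑_{i} ω i · (λ i)^k. Suppose α : Fin r → ℂ satisfies the Hankel linear system ∑_{j=0}^{r−1} α j · y(k + j) = − y(k + r) for every k ∈ {0, …, r−1}. Then X^r + ∑_{j=0}^{r−1} (α j) · X^j = ∏_{i} (X − C(λ i)) in ℂ[X]; in particular, every λ i is a root of the polynomial X^r + α_{r−1} X^{r−1} + ⋯ + α_1 X + α_0. -/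
/-!
With `p = X ^ r + ∑ j, α j X ^ j` and `y k = ∑ i, ω i λ i ^ k`, the `k`-th Hankel equation says
exactly `∑ i, (ω i p(λ i)) λ i ^ k = 0`. Since the nodes `λ i` are distinct, the Vandermonde
matrix is invertible, so every `ω i p(λ i)` vanishes, hence every `λ i` is a root of `p`. A monic
polynomial of degree `r` with `r` distinct roots is the product of the corresponding linear factors.
-/

open Finset Polynomial

namespace Polynomial

variable {R : Type*} [CommRing R]

theorem monic_X_pow_add_sum_fin (n : ℕ) (a : Fin n → R) :
    (X ^ n + ∑ j : Fin n, C (a j) * X ^ (j : ℕ)).Monic :=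
  monic_X_pow_add (degree_sum_fin_lt a)

theorem natDegree_X_pow_add_sum_fin [Nontrivial R] (n : ℕ) (a : Fin n → R) :
    (X ^ n + ∑ j : Fin n, C (a j) * X ^ (j : ℕ)).natDegree = n := by
  rw [natDegree_add_eq_left_of_degree_lt (by simpa only [degree_X_pow] using degree_sum_fin_lt a),
    natDegree_X_pow]

theorem sum_mul_eval_X_pow_add_sum_fin_mul_pow {ι : Type*} (s : Finset ι) (w x : ι → R)
    {n : ℕ} (a : Fin n → R) (k : ℕ) :
    ∑ i ∈ s, w i * (X ^ n + ∑ j : Fin n, C (a j) * X ^ (j : ℕ)).eval (x i) * x i ^ k =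
      ∑ j : Fin n, a j * ∑ i ∈ s, w i * x i ^ (k + j) + ∑ i ∈ s, w i * x i ^ (k + n) := by
  simp only [eval_add, eval_pow, eval_X, eval_finsetSum, eval_mul, eval_C, mul_sum,
    pow_add]
  rw [sum_comm, ← sum_add_distrib]
  refine sum_congr rfl fun i _ => ?_
  rw [mul_add, add_mul, add_comm, mul_sum, sum_mul]
  congr 1
  · exact sum_congr rfl fun j _ => by ring
  · ring

theorem eq_prod_X_sub_C_of_monic_of_eval_eq_zero [IsDomain R] {ι : Type*} [Fintype ι]
    {p : R[X]} (hp : p.Monic) (hdeg : p.natDegree = Fintype.card ι) {x : ι → R}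
    (hx : Function.Injective x) (hroot : ∀ i, p.eval (x i) = 0) :
    p = ∏ i, (X - C (x i)) := by
  have hdvd : ∏ i, (X - C (x i)) ∣ p := by
    have hle : univ.val.map x ≤ p.roots :=
      (Multiset.le_iff_subset (univ.nodup.map hx)).mpr fun a ha => by
        obtain ⟨i, -, rfl⟩ := Multiset.mem_map.mp ha
        exact (mem_roots hp.ne_zero).mpr (hroot i)
    simpa only [Multiset.map_map, Function.comp_def, ← prod_eq_multiset_prod] using
      (Multiset.prod_X_sub_C_dvd_iff_le_roots hp.ne_zero _).mpr hle
  refine eq_of_monic_of_dvd_of_natDegree_le (monic_prod_of_monic _ _ fun i _ => monic_X_sub_C _)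
    hp hdvd ?_
  rw [hdeg, natDegree_prod _ _ fun i _ => X_sub_C_ne_zero _]
  simp

end Polynomial

theorem hankel_system_recovers_characteristic_polynomial_general
    (r : ℕ)
    (lam : Fin r → ℂ) (hlam : Function.Injective lam)
    (ω : Fin r → ℂ) (hω : ∀ i, ω i ≠ 0)
    (y : ℕ → ℂ) (hy : ∀ k, y k = ∑ i, ω i * lam i ^ k)
    (α : Fin r → ℂ)
    (hα : ∀ k < r, ∑ j : Fin r, α j * y (k + (j : ℕ)) = - y (k + r)) :
    (X ^ r + ∑ j : Fin r, C (α j) * X ^ (j : ℕ)) = ∏ i, (X - C (lam i)) := by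
  set p : ℂ[X] := X ^ r + ∑ j : Fin r, C (α j) * X ^ (j : ℕ)
  obtain rfl : y = fun k => ∑ i, ω i * lam i ^ k := funext hy
  have hweighted : (fun i => ω i * p.eval (lam i)) = 0 :=
    Matrix.eq_zero_of_forall_pow_sum_mul_pow_eq_zero hlam fun k => by
      rw [sum_mul_eval_X_pow_add_sum_fin_mul_pow, hα k k.isLt, neg_add_cancel]
  have hroot (i : Fin r) : p.eval (lam i) = 0 :=
    (mul_eq_zero.mp (congrFun hweighted i)).resolve_left (hω i)
  exact eq_prod_X_sub_C_of_monic_of_eval_eq_zero (monic_X_pow_add_sum_fin r α)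
    (by rw [natDegree_X_pow_add_sum_fin, Fintype.card_fin]) hlam hroot

theorem hankel_system_recovers_characteristic_polynomial
    (r : ℕ) (hr : 1 ≤ r)
    (lam : Fin r → ℂ) (hlam : Function.Injective lam)
    (ω : Fin r → ℂ) (hω : ∀ i, ω i ≠ 0)
    (y : ℕ → ℂ) (hy : ∀ k, y k = ∑ i, ω i * lam i ^ k)
    (α : Fin r → ℂ)
    (hα : ∀ k < r, ∑ j : Fin r, α j * y (k + (j : ℕ)) = - y (k + r)) :
    (X ^ r + ∑ j : Fin r, C (α j) * X ^ (j : ℕ)) = ∏ i, (X - C (lam i)) :=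
  hankel_system_recovers_characteristic_polynomial_general r lam hlam ω hω y hy α hα
end

section
/- Let d ≥ 1, let λ : Fin d → ℂ be pairwise distinct (injective), let m : Fin d → ℕ satisfy m i ≥ 1 for every i, and for each i let weights ω i s ∈ ℂ be given for s ∈ {0, …, m i − 1}, with the top weight nonzero: ω i (m i − 1) ≠ 0 for every i. Define y : ℕ → ℂ by y(k) = ∑_{i} ∑_{s=0}^{m i − 1} ω i s · (k.choose s) · (λ i)^{k − s} (natural-number subtraction in the exponent; the term vanishes when k < s since k.choose s = 0). Then for every n ≥ ∑_{i} m i, the n×n Hankel matrix H of y, with entries H j k = y(j + k), has rank equal to ∑_{i} m i. -/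
/-!
The Hankel matrix factors as `H = V D Vᵀ`. Here `V` is the confluent Vandermonde matrix whose
columns are the sequences `k ↦ C(k, a) λᵢ^(k-a)`, `a < mᵢ`, cut off at `n`, and `D` is block
diagonal with blocks `(ω i (a + b))_{a + b < mᵢ}`; this is the Vandermonde convolution
`C(j + k, s) = ∑_{a + b = s} C(j, a) C(k, b)`. Each block is anti-triangular with antidiagonal
`ω i (mᵢ - 1) ≠ 0`, hence invertible. The columns of `V` are independent as soon as
`n ≥ ∑ mᵢ`: these sequences are the generalized eigenvectors of the shift operator, and a
polynomial in the shift of degree `< n` separates them using only the first `n` terms. So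
`rank H = rank V = ∑ mᵢ`.
-/

open Finset Polynomial Matrix

namespace Hankel

variable {R : Type*}

section Shift

variable [CommRing R]

def seqShift : (ℕ → R) →ₗ[R] (ℕ → R) where
  toFun f k := f (k + 1)
  map_add' _ _ := rfl
  map_smul' _ _ := rfl

def binomPow (l : R) (a k : ℕ) : R := (k.choose a : R) * l ^ (k - a)

lemma seqShift_pow_apply (t : ℕ) (f : ℕ → R) (k : ℕ) : (seqShift ^ t) f k = f (k + t) := by
  induction t generalizing f with
  | zero => rfl
  | succ t ih =>
    rw [pow_succ, Module.End.mul_apply, ih]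
    rfl

lemma aeval_seqShift_apply (P : R[X]) (f : ℕ → R) (k : ℕ) :
    aeval seqShift P f k = ∑ t ∈ range (P.natDegree + 1), P.coeff t * f (k + t) := by
  simp only [aeval_eq_sum_range, LinearMap.coe_sum, Finset.sum_apply, LinearMap.smul_apply,
    Pi.smul_apply, seqShift_pow_apply, smul_eq_mul]

lemma aeval_X_sub_C_seqShift_apply (l : R) (f : ℕ → R) (k : ℕ) :
    aeval seqShift (X - C l) f k = f (k + 1) - l * f k := by
  simp only [map_sub, aeval_X, aeval_C, LinearMap.sub_apply, Module.algebraMap_end_apply,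
    Pi.sub_apply, Pi.smul_apply, smul_eq_mul]
  rfl

lemma binomPow_eq_coeff (l : R) (a k : ℕ) : binomPow l a k = ((X + C l) ^ k).coeff a := by
  rw [binomPow, coeff_X_add_C_pow, mul_comm]

lemma binomPow_succ_succ (l : R) (a k : ℕ) :
    binomPow l (a + 1) (k + 1) = binomPow l a k + l * binomPow l (a + 1) k := by
  simp only [binomPow_eq_coeff, pow_succ, mul_add, coeff_add, coeff_mul_X, coeff_mul_C, mul_comm l]

lemma binomPow_zero_succ (l : R) (k : ℕ) : binomPow l 0 (k + 1) = l * binomPow l 0 k := by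
  simp [binomPow, pow_succ, mul_comm]

lemma aeval_X_sub_C_binomPow_succ (l : R) (a : ℕ) :
    aeval seqShift (X - C l) (binomPow l (a + 1)) = binomPow l a := by
  funext k
  rw [aeval_X_sub_C_seqShift_apply, binomPow_succ_succ, add_sub_cancel_right]

lemma aeval_X_sub_C_binomPow_zero (l : R) : aeval seqShift (X - C l) (binomPow l 0) = 0 := by
  funext k
  rw [aeval_X_sub_C_seqShift_apply, binomPow_zero_succ, sub_self, Pi.zero_apply]

lemma aeval_X_sub_C_pow_binomPow_add (l : R) (a e : ℕ) :
    aeval seqShift ((X - C l) ^ e) (binomPow l (a + e)) = binomPow l a := by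
  induction e with
  | zero => simp
  | succ e ih =>
    rw [pow_succ, map_mul, Module.End.mul_apply, ← add_assoc, aeval_X_sub_C_binomPow_succ, ih]

lemma aeval_X_sub_C_pow_binomPow_self (l : R) (a : ℕ) :
    aeval seqShift ((X - C l) ^ a) (binomPow l a) = binomPow l 0 := by
  simpa using aeval_X_sub_C_pow_binomPow_add l 0 a

lemma aeval_binomPow_eq_zero_of_dvd {l : R} {a e : ℕ} {Q : R[X]} (hQ : (X - C l) ^ e ∣ Q)
    (ha : a < e) : aeval seqShift Q (binomPow l a) = 0 := by
  obtain ⟨P, rfl⟩ := (pow_dvd_pow _ ha).trans hQ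
  rw [mul_comm, pow_succ', map_mul, map_mul, Module.End.mul_apply, Module.End.mul_apply,
    aeval_X_sub_C_pow_binomPow_self, aeval_X_sub_C_binomPow_zero, map_zero]

lemma aeval_seqShift_binomPow_zero (P : R[X]) (l : R) :
    aeval seqShift P (binomPow l 0) = P.eval l • binomPow l 0 := by
  funext k
  simp only [aeval_seqShift_apply, eval_eq_sum_range, Pi.smul_apply, smul_eq_mul, sum_mul,
    binomPow, Nat.choose_zero_right, Nat.cast_one, one_mul, Nat.sub_zero, pow_add]
  exact sum_congr rfl fun t _ => by ring

end Shift

section Vandermonde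

variable [CommRing R] {ι : Type*}

def confluentVandermonde (lam : ι → R) (m : ι → ℕ) (n : ℕ) :
    Matrix (Fin n) ((i : ι) × Fin (m i)) R :=
  Matrix.of fun j p => binomPow (lam p.1) p.2 j

variable [IsDomain R] [Fintype ι] [DecidableEq ι] {lam : ι → R} {m : ι → ℕ} {n : ℕ}

/-- `Q = ∏_{j ≠ i₀} (S - λⱼ)^{mⱼ} · (S - λᵢ₀)^{a₀}` in the shift `S` has degree `< n`, so it sends
the combination `g = ∑ xₚ binomPow`, which vanishes on `[0, n)`, to a sequence vanishing at `0`;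
but `Q` kills every column except `(i₀, a₀)` and the higher ones, whose coefficients are `0`. -/
lemma apply_eq_zero_of_confluentVandermonde_mulVec_eq_zero (hlam : Function.Injective lam)
    (hn : ∑ i, m i ≤ n) {x : ((i : ι) × Fin (m i)) → R} (hx : confluentVandermonde lam m n *ᵥ x = 0)
    (i₀ : ι) (a₀ : Fin (m i₀)) (hgt : ∀ b, a₀ < b → x ⟨i₀, b⟩ = 0) : x ⟨i₀, a₀⟩ = 0 := by
  set g : ℕ → R := ∑ p, x p • binomPow (lam p.1) p.2
  set P : R[X] := ∏ j ∈ univ.erase i₀, (X - C (lam j)) ^ m j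
  set Q : R[X] := P * (X - C (lam i₀)) ^ (a₀ : ℕ)
  have hg : ∀ k < n, g k = 0 := fun k hk => by
    simpa [g, Matrix.mulVec, dotProduct, confluentVandermonde, mul_comm] using congrFun hx ⟨k, hk⟩
  have hdeg : Q.natDegree < n := calc
    Q.natDegree ≤ ∑ j ∈ univ.erase i₀, m j + a₀ := by
      refine natDegree_mul_le.trans
        (add_le_add ((natDegree_prod_le _ _).trans (sum_le_sum fun j _ => ?_)) ?_) <;>
      rw [natDegree_pow, natDegree_X_sub_C, mul_one]
    _ < ∑ j ∈ univ.erase i₀, m j + m i₀ := by have := a₀.isLt; omega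
    _ ≤ n := by rwa [sum_erase_add _ _ (mem_univ i₀)]
  have hzero : aeval seqShift Q g 0 = 0 := by
    rw [aeval_seqShift_apply]
    exact sum_eq_zero fun t ht => by rw [zero_add, hg t (by grind), mul_zero]
  have hkill : ∀ p ≠ ⟨i₀, a₀⟩, x p • aeval seqShift Q (binomPow (lam p.1) p.2) = 0 := by
    rintro ⟨i, b⟩ hp
    rcases eq_or_ne i i₀ with rfl | hi
    · rcases lt_or_gt_of_ne (fun h : b = a₀ => hp (h ▸ rfl)) with hb | hb
      · rw [aeval_binomPow_eq_zero_of_dvd (dvd_mul_left _ _) hb, smul_zero]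
      · rw [hgt b hb, zero_smul]
    · have hdvd : (X - C (lam i)) ^ m i ∣ Q :=
        (dvd_prod_of_mem _ (mem_erase.mpr ⟨hi, mem_univ i⟩)).mul_right _
      rw [aeval_binomPow_eq_zero_of_dvd hdvd b.isLt, smul_zero]
  have hval : aeval seqShift Q g 0 = x ⟨i₀, a₀⟩ * P.eval (lam i₀) := by
    rw [map_sum, sum_eq_single _ (fun p _ hp => by rw [map_smul, hkill p hp]) (by simp),
      map_smul, map_mul, Module.End.mul_apply, aeval_X_sub_C_pow_binomPow_self,
      aeval_seqShift_binomPow_zero]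
    simp [binomPow]
  have hP : P.eval (lam i₀) ≠ 0 := by
    simp only [P, eval_prod, eval_pow, eval_sub, eval_X, eval_C, prod_ne_zero_iff]
    exact fun j hj => pow_ne_zero _ (sub_ne_zero.mpr (hlam.ne (ne_of_mem_erase hj).symm))
  exact (mul_eq_zero.mp (hval ▸ hzero)).resolve_right hP

theorem ker_mulVecLin_confluentVandermonde (hlam : Function.Injective lam) (hn : ∑ i, m i ≤ n) :
    LinearMap.ker (confluentVandermonde lam m n).mulVecLin = ⊥ := by
  refine LinearMap.ker_eq_bot'.mpr fun x hx => funext fun ⟨i, a⟩ => ?_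
  induction a using WellFoundedGT.induction with
  | _ a ih => exact apply_eq_zero_of_confluentVandermonde_mulVec_eq_zero hlam hn hx i a ih

end Vandermonde

lemma sum_range_sum_antidiagonal {M : Type*} [AddCommMonoid M] (m : ℕ) (f : ℕ × ℕ → M) :
    ∑ s ∈ range m, ∑ p ∈ antidiagonal s, f p =
      ∑ a ∈ range m, ∑ b ∈ range m, if a + b < m then f (a, b) else 0 := by
  rw [sum_sigma', ← sum_product', ← sum_filter]
  refine sum_nbij' (fun x => x.2) (fun p => ⟨p.1 + p.2, p⟩) ?_ ?_ ?_ ?_ (fun _ _ => rfl) <;>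
    simp only [mem_sigma, mem_range, HasAntidiagonal.mem_antidiagonal, mem_filter, mem_product] <;>
    grind

section Factorization

variable [CommRing R]

def hankel (y : ℕ → R) (n : ℕ) : Matrix (Fin n) (Fin n) R := Matrix.of fun j k => y (j + k)

def truncatedHankel (w : ℕ → R) (m : ℕ) : Matrix (Fin m) (Fin m) R :=
  Matrix.of fun a b => if (a : ℕ) + b < m then w (a + b) else 0

lemma binomPow_add (l : R) (s j k : ℕ) :
    binomPow l s (j + k) = ∑ p ∈ antidiagonal s, binomPow l p.1 j * binomPow l p.2 k := by
  simp only [binomPow_eq_coeff, pow_add, coeff_mul]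

lemma sum_range_mul_binomPow_add (w : ℕ → R) (l : R) (m j k : ℕ) :
    ∑ s ∈ range m, w s * binomPow l s (j + k) =
      ∑ a : Fin m, ∑ b : Fin m, binomPow l a j * truncatedHankel w m a b * binomPow l b k := by
  calc ∑ s ∈ range m, w s * binomPow l s (j + k)
      = ∑ s ∈ range m, ∑ p ∈ antidiagonal s,
          w (p.1 + p.2) * (binomPow l p.1 j * binomPow l p.2 k) :=
        sum_congr rfl fun s _ => by
          rw [binomPow_add, mul_sum]
          exact sum_congr rfl fun p hp => by rw [HasAntidiagonal.mem_antidiagonal.mp hp]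
    _ = _ := by
      rw [sum_range_sum_antidiagonal, ← Fin.sum_univ_eq_sum_range]
      refine sum_congr rfl fun a _ => ?_
      rw [← Fin.sum_univ_eq_sum_range]
      refine sum_congr rfl fun b _ => ?_
      simp only [truncatedHankel, Matrix.of_apply]
      split_ifs <;> ring

lemma mul_blockDiagonal'_mul_apply {α l o ι : Type*} {m' n' : ι → Type*} [Fintype ι] [DecidableEq ι]
    [∀ i, Fintype (m' i)] [∀ i, Fintype (n' i)] [NonUnitalNonAssocSemiring α]
    (A : Matrix l ((i : ι) × m' i) α) (B : ∀ i, Matrix (m' i) (n' i) α)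
    (C : Matrix ((i : ι) × n' i) o α) (j : l) (k : o) :
    (A * blockDiagonal' B * C) j k = ∑ i, ∑ a, ∑ b, A j ⟨i, a⟩ * B i a b * C ⟨i, b⟩ k := by
  have hAB : ∀ i b, (A * blockDiagonal' B) j ⟨i, b⟩ = ∑ a, A j ⟨i, a⟩ * B i a b := fun i b => by
    rw [mul_apply, Fintype.sum_sigma, sum_eq_single i]
    · simp only [blockDiagonal'_apply_eq]
    · intro i' _ hi
      exact sum_eq_zero fun a _ => by rw [blockDiagonal'_apply_ne _ _ _ hi, mul_zero]
    · simp
  simp only [mul_apply (M := A * blockDiagonal' B), Fintype.sum_sigma, hAB, sum_mul]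
  exact sum_congr rfl fun i _ => by rw [sum_comm]

variable {ι : Type*} [Fintype ι] [DecidableEq ι]

lemma hankel_eq_confluentVandermonde_mul_mul_transpose (lam : ι → R) (m : ι → ℕ)
    (ω : ι → ℕ → R) (n : ℕ) :
    hankel (fun k => ∑ i, ∑ s ∈ range (m i), ω i s * binomPow (lam i) s k) n =
      confluentVandermonde lam m n * blockDiagonal' (fun i => truncatedHankel (ω i) (m i)) *
        (confluentVandermonde lam m n)ᵀ := by
  ext j k
  rw [mul_blockDiagonal'_mul_apply]
  simp only [hankel, confluentVandermonde, Matrix.of_apply, transpose_apply,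
    sum_range_mul_binomPow_add]

end Factorization

section Rank

variable {K : Type*} [Field K]

lemma isUnit_truncatedHankel {w : ℕ → K} {m : ℕ} (hw : w (m - 1) ≠ 0) :
    IsUnit (truncatedHankel w m) := by
  set B := truncatedHankel w m
  have hrev : (B.submatrix id Fin.revPerm).IsUpperTriangular := fun a b hba => by
    simp only [B, truncatedHankel, submatrix_apply, id_eq, Fin.revPerm_apply, Fin.val_rev,
      Matrix.of_apply]
    have : (b : ℕ) < a := hba
    rw [if_neg (by omega)]
  have hdiag : ∀ a, B.submatrix id Fin.revPerm a a = w (m - 1) := fun a => by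
    simp only [B, truncatedHankel, submatrix_apply, id_eq, Fin.revPerm_apply, Fin.val_rev,
      Matrix.of_apply]
    rw [if_pos (by omega), show (a : ℕ) + (m - (a + 1)) = m - 1 by omega]
  have hdet := det_permute' Fin.revPerm B
  rw [det_of_isUpperTriangular hrev, prod_congr rfl fun a _ => hdiag a, prod_const] at hdet
  rw [isUnit_iff_isUnit_det, isUnit_iff_ne_zero]
  exact right_ne_zero_of_mul (hdet ▸ pow_ne_zero _ hw)

variable {l m n : Type*} [Fintype m] [Fintype n]

lemma rank_mul_eq_right_of_ker_mulVecLin_eq_bot {A : Matrix l m K}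
    (hA : LinearMap.ker A.mulVecLin = ⊥) (B : Matrix m n K) : (A * B).rank = B.rank := by
  rw [rank, rank, mulVecLin_mul, LinearMap.range_comp]
  exact (Submodule.equivMapOfInjective _ (LinearMap.ker_eq_bot.mp hA) _).finrank_eq.symm

lemma rank_mul_mul_transpose_of_ker_mulVecLin_eq_bot [Fintype l] [DecidableEq m]
    {V : Matrix l m K} (hV : LinearMap.ker V.mulVecLin = ⊥) {M : Matrix m m K} (hM : IsUnit M) :
    (V * M * Vᵀ).rank = Fintype.card m := by
  rw [Matrix.mul_assoc, rank_mul_eq_right_of_ker_mulVecLin_eq_bot hV,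
    rank_mul_eq_right_of_isUnit_det _ _ ((isUnit_iff_isUnit_det M).mp hM), rank_transpose, rank,
    LinearMap.finrank_range_of_inj (LinearMap.ker_eq_bot.mp hV), Module.finrank_fintype_fun_eq_card]

end Rank

end Hankel

open Hankel

theorem hankel_rank_eq_sum_of_largest_block_sizes_general
    (d : ℕ)
    (lam : Fin d → ℂ) (hlam : Function.Injective lam)
    (m : Fin d → ℕ)
    (ω : Fin d → ℕ → ℂ) (hω : ∀ i, ω i (m i - 1) ≠ 0)
    (y : ℕ → ℂ)
    (hy : ∀ k, y k = ∑ i, ∑ s ∈ Finset.range (m i),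
      ω i s * (k.choose s : ℂ) * lam i ^ (k - s)) :
    ∀ n : ℕ, (∑ i, m i) ≤ n →
      ∀ H : Matrix (Fin n) (Fin n) ℂ,
        (∀ j k : Fin n, H j k = y ((j : ℕ) + (k : ℕ))) →
        H.rank = ∑ i, m i := by
  intro n hn H hH
  have hHankel : H = hankel (fun k => ∑ i, ∑ s ∈ range (m i), ω i s * binomPow (lam i) s k) n := by
    ext j k
    simp only [hH, hy, hankel, binomPow, Matrix.of_apply, mul_assoc]
  have hBlocks : IsUnit (blockDiagonal' fun i => truncatedHankel (ω i) (m i)) :=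
    (Pi.isUnit_iff.mpr fun i => isUnit_truncatedHankel (hω i)).map (blockDiagonal'RingHom _ ℂ)
  rw [hHankel, hankel_eq_confluentVandermonde_mul_mul_transpose,
    rank_mul_mul_transpose_of_ker_mulVecLin_eq_bot (ker_mulVecLin_confluentVandermonde hlam hn)
      hBlocks, Fintype.card_sigma]
  simp only [Fintype.card_fin]

theorem hankel_rank_eq_sum_of_largest_block_sizes
    (d : ℕ) (hd : 1 ≤ d)
    (lam : Fin d → ℂ) (hlam : Function.Injective lam)
    (m : Fin d → ℕ) (hm : ∀ i, 1 ≤ m i)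
    (ω : Fin d → ℕ → ℂ) (hω : ∀ i, ω i (m i - 1) ≠ 0)
    (y : ℕ → ℂ)
    (hy : ∀ k, y k = ∑ i, ∑ s ∈ Finset.range (m i),
      ω i s * (k.choose s : ℂ) * lam i ^ (k - s)) :
    ∀ n : ℕ, (∑ i, m i) ≤ n →
      ∀ H : Matrix (Fin n) (Fin n) ℂ,
        (∀ j k : Fin n, H j k = y ((j : ℕ) + (k : ℕ))) →
        H.rank = ∑ i, m i :=
  hankel_rank_eq_sum_of_largest_block_sizes_general d lam hlam m ω hω y hy
end

section
/- Let d ≥ 1, let λ : Fin d → ℂ be pairwise distinct (injective), let m : Fin d → ℕ satisfy m i ≥ 1 for every i, let weights ω i s ∈ ℂ be given for s ∈ {0, …, m i − 1} with ω i (m i − 1) ≠ 0 for every i, and define y : ℕ → ℂ by y(k) = ∑_{i} ∑_{s=0}^{m i − 1} ω i s · (k.choose s) · (λ i)^{k − s}. Let r = ∑_{i} m i. Suppose α : Fin r → ℂ satisfies ∑_{j=0}^{r−1} α j · y(k + j) = − y(k + r) for every k ∈ {0, …, r−1}. Then X^r + ∑_{j=0}^{r−1} (α j) · X^j = ∏_{i}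 (X − C(λ i))^{m i} in ℂ[X]; in particular, each λ i is a root of this polynomial of multiplicity exactly m i. -/
/-!
Let `S` be the shift of sequences. The block `∑ₛ ω i s (k choose s) λᵢ^(k-s)` is killed by
`(S - λᵢ)^mᵢ`, so `q = ∏ᵢ (X - λᵢ)^mᵢ` annihilates `y`. It is the minimal annihilator: removing
one factor `X - λⱼ` leaves a polynomial sending `y` to a sequence with initial term
`ω j (m j - 1) ∏_{i ≠ j} (λⱼ - λᵢ)^mᵢ ≠ 0`. The Hankel equations say that `p(S) y`, for the monic
`p` built from `α`, vanishes at `0, …, r - 1`; being also annihilated by the monic degree-`r`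
polynomial `q`, it vanishes identically. Hence `q ∣ p`, and both are monic of degree `r`.
-/

open Finset Polynomial

section Shift

variable {R : Type*} [CommRing R]

def shiftSeq : Module.End R (ℕ → R) where
  toFun y k := y (k + 1)
  map_add' _ _ := rfl
  map_smul' _ _ := rfl

@[simp]
lemma shiftSeq_apply (y : ℕ → R) (k : ℕ) : shiftSeq y k = y (k + 1) := rfl

lemma shiftSeq_pow_apply (n : ℕ) (y : ℕ → R) (k : ℕ) : (shiftSeq ^ n) y k = y (k + n) := by
  induction n generalizing k with
  | zero => rfl
  | succ n ih => rw [pow_succ', Module.End.mul_apply, shiftSeq_apply, ih, add_right_comm, add_assoc]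

lemma aeval_shiftSeq_apply {f : R[X]} {N : ℕ} (hN : f.natDegree < N) (y : ℕ → R) (k : ℕ) :
    aeval shiftSeq f y k = ∑ t ∈ range N, f.coeff t * y (k + t) := by
  simp [aeval_eq_sum_range' hN, Finset.sum_apply, shiftSeq_pow_apply]

lemma aeval_shiftSeq_X_pow_add_sum_apply {r : ℕ} (α : Fin r → R) (y : ℕ → R) (k : ℕ) :
    aeval shiftSeq (X ^ r + ∑ j : Fin r, C (α j) * X ^ (j : ℕ)) y k
      = y (k + r) + ∑ j : Fin r, α j * y (k + j) := by
  simp [Finset.sum_apply, shiftSeq_pow_apply, Module.algebraMap_end_apply]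

lemma aeval_shiftSeq_eq_zero_of_dvd {f g : R[X]} {y : ℕ → R} (hgf : g ∣ f)
    (hg : aeval shiftSeq g y = 0) : aeval shiftSeq f y = 0 := by
  obtain ⟨h, rfl⟩ := hgf
  rw [mul_comm, map_mul, Module.End.mul_apply, hg, map_zero]

lemma eq_zero_of_aeval_shiftSeq_eq_zero {q : R[X]} (hq : q.Monic) {z : ℕ → R}
    (hz : aeval shiftSeq q z = 0) (hinit : ∀ k < q.natDegree, z k = 0) : z = 0 := by
  funext n
  induction n using Nat.strong_induction_on with
  | _ n ih =>
    by_cases hn : n < q.natDegree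
    · exact hinit n hn
    have hrec := congrFun hz (n - q.natDegree)
    rw [aeval_shiftSeq_apply (Nat.lt_succ_self _), sum_range_succ, hq.coeff_natDegree, one_mul,
      Nat.sub_add_cancel (not_lt.mp hn),
      sum_eq_zero fun t ht => by rw [ih _ (by simp at ht; omega), Pi.zero_apply, mul_zero],
      zero_add] at hrec
    exact hrec

-- `k.choose s = 0` for `k < s`, so the truncated `k - s` is harmless.
def binomialSeq (a : R) (s : ℕ) : ℕ → R := fun k => k.choose s * a ^ (k - s)

lemma aeval_X_sub_C_apply (a : R) (y : ℕ → R) (k : ℕ) :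
    aeval shiftSeq (X - C a) y k = y (k + 1) - a * y k := by
  simp [Module.algebraMap_end_apply]

lemma aeval_X_sub_C_binomialSeq_zero (a : R) : aeval shiftSeq (X - C a) (binomialSeq a 0) = 0 := by
  funext k
  simp [binomialSeq, pow_succ, mul_comm]

lemma aeval_X_sub_C_binomialSeq_succ (a : R) (s : ℕ) :
    aeval shiftSeq (X - C a) (binomialSeq a (s + 1)) = binomialSeq a s := by
  funext k
  simp only [aeval_X_sub_C_apply, binomialSeq]
  rcases lt_trichotomy k s with h | rfl | h
  · simp [Nat.choose_eq_zero_of_lt, h, Nat.lt_succ_of_lt h]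
  · simp
  · rw [Nat.choose_succ_succ', Nat.succ_sub_succ, show k - s = k - (s + 1) + 1 by omega]
    push_cast
    ring

lemma aeval_X_sub_C_pow_binomialSeq_add (a : R) (e s : ℕ) :
    aeval shiftSeq ((X - C a) ^ e) (binomialSeq a (s + e)) = binomialSeq a s := by
  induction e with
  | zero => simp
  | succ e ih =>
    rw [pow_succ, map_mul, Module.End.mul_apply, ← add_assoc, aeval_X_sub_C_binomialSeq_succ, ih]

lemma aeval_X_sub_C_pow_binomialSeq_self (a : R) (s : ℕ) :
    aeval shiftSeq ((X - C a) ^ s) (binomialSeq a s) = binomialSeq a 0 := by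
  simpa using aeval_X_sub_C_pow_binomialSeq_add a s 0

lemma aeval_X_sub_C_pow_binomialSeq_of_lt (a : R) {s e : ℕ} (h : s < e) :
    aeval shiftSeq ((X - C a) ^ e) (binomialSeq a s) = 0 := by
  obtain ⟨e, rfl⟩ := Nat.exists_eq_add_of_lt h
  rw [show s + e + 1 = e + 1 + s by omega, pow_add, map_mul, Module.End.mul_apply,
    aeval_X_sub_C_pow_binomialSeq_self, pow_succ, map_mul, Module.End.mul_apply,
    aeval_X_sub_C_binomialSeq_zero, map_zero]

lemma aeval_binomialSeq_zero_apply_zero (f : R[X]) (a : R) :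
    aeval shiftSeq f (binomialSeq a 0) 0 = f.eval a := by
  simp [aeval_shiftSeq_apply (Nat.lt_succ_self _), eval_eq_sum_range, binomialSeq]

lemma aeval_X_sub_C_pow_sum_binomialSeq (a : R) (n : ℕ) (w : ℕ → R) :
    aeval shiftSeq ((X - C a) ^ n) (∑ s ∈ range n, w s • binomialSeq a s) = 0 := by
  rw [map_sum]
  exact sum_eq_zero fun s hs => by
    rw [map_smul, aeval_X_sub_C_pow_binomialSeq_of_lt a (mem_range.mp hs), smul_zero]

lemma aeval_X_sub_C_pow_sum_binomialSeq_succ (a : R) (n : ℕ) (w : ℕ → R) :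
    aeval shiftSeq ((X - C a) ^ n) (∑ s ∈ range (n + 1), w s • binomialSeq a s)
      = w n • binomialSeq a 0 := by
  rw [sum_range_succ, map_add, aeval_X_sub_C_pow_sum_binomialSeq, zero_add, map_smul,
    aeval_X_sub_C_pow_binomialSeq_self]

end Shift

section AlgClosed

variable {K : Type*} [Field K] [IsAlgClosed K]

/-- `gcd f q` annihilates `y` by Bézout; were it a proper divisor of `q`, a root `μ` of the
cofactor would produce a forbidden `g`. -/
lemma dvd_of_aeval_shiftSeq_eq_zero {q f : K[X]} {y : ℕ → K} (hq : aeval shiftSeq q y = 0)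
    (hmin : ∀ μ g, q = g * (X - C μ) → aeval shiftSeq g y ≠ 0)
    (hf : aeval shiftSeq f y = 0) : q ∣ f := by
  classical
  set g := EuclideanDomain.gcd f q with hg_def
  have hg : aeval shiftSeq g y = 0 := by
    rw [hg_def, EuclideanDomain.gcd_eq_gcd_ab, map_add, LinearMap.add_apply,
      aeval_shiftSeq_eq_zero_of_dvd (dvd_mul_right f _) hf,
      aeval_shiftSeq_eq_zero_of_dvd (dvd_mul_right q _) hq, add_zero]
  obtain ⟨w, hw⟩ : g ∣ q := EuclideanDomain.gcd_dvd_right f q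
  by_cases hw_unit : IsUnit w
  · exact hw ▸ (hw_unit.mul_right_dvd.mpr dvd_rfl).trans (EuclideanDomain.gcd_dvd_left f q)
  obtain ⟨μ, hμ⟩ := IsAlgClosed.exists_root w (mt isUnit_iff_degree_eq_zero.mpr hw_unit)
  obtain ⟨w', hw'⟩ := dvd_iff_isRoot.mpr hμ
  exact absurd (aeval_shiftSeq_eq_zero_of_dvd (dvd_mul_right g w') hg)
    (hmin μ (g * w') (by rw [hw, hw']; ring))

end AlgClosed

section Product

variable {R : Type*} [CommRing R] {ι : Type*} [Fintype ι]

lemma aeval_prod_X_sub_C_pow_sum_binomialSeq (a : ι → R) (m : ι → ℕ) (w : ι → ℕ → R) :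
    aeval shiftSeq (∏ i, (X - C (a i)) ^ m i)
      (∑ i, ∑ s ∈ range (m i), w i s • binomialSeq (a i) s) = 0 := by
  rw [map_sum]
  exact sum_eq_zero fun i _ =>
    aeval_shiftSeq_eq_zero_of_dvd (dvd_prod_of_mem _ (mem_univ i))
      (aeval_X_sub_C_pow_sum_binomialSeq _ _ _)

variable [DecidableEq ι]

lemma prod_erase_mul_X_sub_C_pow_pred_mul_X_sub_C (a : ι → R) {m : ι → ℕ} {j : ι}
    (hj : 1 ≤ m j) :
    (∏ i ∈ univ.erase j, (X - C (a i)) ^ m i) * (X - C (a j)) ^ (m j - 1) * (X - C (a j))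
      = ∏ i, (X - C (a i)) ^ m i := by
  rw [mul_assoc, ← pow_succ, Nat.sub_add_cancel hj, prod_erase_mul _ _ (mem_univ j)]

lemma aeval_prod_erase_mul_X_sub_C_pow_pred_sum_binomialSeq_apply_zero (a : ι → R)
    {m : ι → ℕ} (w : ι → ℕ → R) {j : ι} (hj : 1 ≤ m j) :
    aeval shiftSeq ((∏ i ∈ univ.erase j, (X - C (a i)) ^ m i) * (X - C (a j)) ^ (m j - 1))
      (∑ i, ∑ s ∈ range (m i), w i s • binomialSeq (a i) s) 0
      = w j (m j - 1) * ∏ i ∈ univ.erase j, (a j - a i) ^ m i := by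
  rw [map_sum, Finset.sum_apply, sum_eq_single j]
  · obtain ⟨n, hn⟩ := Nat.exists_eq_add_of_le' hj
    rw [map_mul, Module.End.mul_apply, hn, Nat.add_sub_cancel,
      aeval_X_sub_C_pow_sum_binomialSeq_succ, map_smul, Pi.smul_apply,
      aeval_binomialSeq_zero_apply_zero, eval_prod, smul_eq_mul]
    simp
  · intro i _ hij
    exact congrFun (aeval_shiftSeq_eq_zero_of_dvd
      (dvd_mul_of_dvd_left (dvd_prod_of_mem _ (mem_erase.mpr ⟨hij, mem_univ i⟩)) _)
      (aeval_X_sub_C_pow_sum_binomialSeq _ _ _)) 0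
  · exact fun h => absurd (mem_univ j) h

lemma aeval_sum_binomialSeq_ne_zero_of_prod_eq_mul_X_sub_C [IsDomain R] {a : ι → R}
    (ha : Function.Injective a) {m : ι → ℕ} (hm : ∀ i, 1 ≤ m i) {w : ι → ℕ → R}
    (hw : ∀ i, w i (m i - 1) ≠ 0) {μ : R} {f : R[X]}
    (hf : ∏ i, (X - C (a i)) ^ m i = f * (X - C μ)) :
    aeval shiftSeq f (∑ i, ∑ s ∈ range (m i), w i s • binomialSeq (a i) s) ≠ 0 := by
  have hμ : IsRoot (∏ i, (X - C (a i)) ^ m i) μ := by simp [hf]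
  obtain ⟨j, -, hj⟩ := (isRoot_prod _ _ μ).mp hμ
  rw [IsRoot, eval_pow] at hj
  obtain rfl : a j = μ := root_X_sub_C.mp (eq_zero_of_pow_eq_zero hj)
  have hfj : f = (∏ i ∈ univ.erase j, (X - C (a i)) ^ m i) * (X - C (a j)) ^ (m j - 1) :=
    mul_right_cancel₀ (X_sub_C_ne_zero _)
      (hf.symm.trans (prod_erase_mul_X_sub_C_pow_pred_mul_X_sub_C a (hm j)).symm)
  intro h
  have h0 := congrFun h 0
  rw [hfj, aeval_prod_erase_mul_X_sub_C_pow_pred_sum_binomialSeq_apply_zero a w (hm j)] at h0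
  exact mul_ne_zero (hw j) (prod_ne_zero_iff.mpr fun i hi =>
    pow_ne_zero _ (sub_ne_zero.mpr (ha.ne (mem_erase.mp hi).1.symm))) h0

end Product

theorem hankel_system_recovers_polynomial_with_multiplicities_general
    (d : ℕ)
    (lam : Fin d → ℂ) (hlam : Function.Injective lam)
    (m : Fin d → ℕ) (hm : ∀ i, 1 ≤ m i)
    (ω : Fin d → ℕ → ℂ) (hω : ∀ i, ω i (m i - 1) ≠ 0)
    (y : ℕ → ℂ)
    (hy : ∀ k, y k = ∑ i, ∑ s ∈ Finset.range (m i),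
      ω i s * (k.choose s : ℂ) * lam i ^ (k - s))
    (r : ℕ) (hr : r = ∑ i, m i)
    (α : Fin r → ℂ)
    (hα : ∀ k < r, ∑ j : Fin r, α j * y (k + (j : ℕ)) = - y (k + r)) :
    (X ^ r + ∑ j : Fin r, C (α j) * X ^ (j : ℕ)) = ∏ i, (X - C (lam i)) ^ m i := by
  set q := ∏ i, (X - C (lam i)) ^ m i
  have hy_binom : y = ∑ i, ∑ s ∈ range (m i), ω i s • binomialSeq (lam i) s := by
    funext k
    simp [hy, Finset.sum_apply, binomialSeq, mul_assoc]
  have hq : aeval shiftSeq q y = 0 := hy_binom ▸ aeval_prod_X_sub_C_pow_sum_binomialSeq _ _ _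
  have hq_monic : q.Monic := monic_prod_of_monic _ _ fun i _ => (monic_X_sub_C _).pow _
  have hq_deg : q.natDegree = r := by
    simp [q, natDegree_prod_of_monic _ _ fun i _ => (monic_X_sub_C (lam i)).pow (m i), hr]
  have hsum_deg := degree_sum_fin_lt α
  have hp : aeval shiftSeq (X ^ r + ∑ j : Fin r, C (α j) * X ^ (j : ℕ)) y = 0 := by
    refine eq_zero_of_aeval_shiftSeq_eq_zero hq_monic ?_ fun k hk => ?_
    · simpa only [map_mul, Module.End.mul_apply] using
        aeval_shiftSeq_eq_zero_of_dvd (dvd_mul_right q (X ^ r + _)) hq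
    · rw [aeval_shiftSeq_X_pow_add_sum_apply, hα k (hq_deg ▸ hk), add_neg_cancel]
  refine eq_of_monic_of_dvd_of_natDegree_le hq_monic (monic_X_pow_add hsum_deg) ?_ ?_
  · exact dvd_of_aeval_shiftSeq_eq_zero hq (fun μ g hg => hy_binom ▸
      aeval_sum_binomialSeq_ne_zero_of_prod_eq_mul_X_sub_C hlam hm hω hg) hp
  · rw [natDegree_add_eq_left_of_degree_lt (by rwa [degree_X_pow]), natDegree_X_pow, hq_deg]

theorem hankel_system_recovers_polynomial_with_multiplicities
    (d : ℕ) (hd : 1 ≤ d)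
    (lam : Fin d → ℂ) (hlam : Function.Injective lam)
    (m : Fin d → ℕ) (hm : ∀ i, 1 ≤ m i)
    (ω : Fin d → ℕ → ℂ) (hω : ∀ i, ω i (m i - 1) ≠ 0)
    (y : ℕ → ℂ)
    (hy : ∀ k, y k = ∑ i, ∑ s ∈ Finset.range (m i),
      ω i s * (k.choose s : ℂ) * lam i ^ (k - s))
    (r : ℕ) (hr : r = ∑ i, m i)
    (α : Fin r → ℂ)
    (hα : ∀ k < r, ∑ j : Fin r, α j * y (k + (j : ℕ)) = - y (k + r)) :
    (X ^ r + ∑ j : Fin r, C (α j) * X ^ (j : ℕ)) = ∏ i, (X - C (lam i)) ^ m i :=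
  hankel_system_recovers_polynomial_with_multiplicities_general d lam hlam m hm ω hω y hy r hr α hα
end

section
/- Let n ≥ 1, let λ ∈ ℂ, and let s ∈ ℕ with s < n. Define the n×n complex matrix D by D j k = ((j + k).choose s) · λ^{(j + k) − s} for j, k ∈ Fin n (natural-number subtraction in the exponent; the entry vanishes when j + k < s since the binomial coefficient is 0). Then the rank of D equals s + 1. -/
/-!
The entry `D j k` is the value at `λ` of the `s`-th Hasse derivative of `X ^ j * X ^ k`. Leibniz's
rule writes it as `∑_{i ≤ s} D^i(X ^ j)(λ) · D^(s-i)(X ^ k)(λ)`, so `D` factors through `ℂ^(s+1)` and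
has rank at most `s + 1`. Conversely, the leading `(s+1) × (s+1)` block of `D` is a Hankel matrix
whose entries vanish above the anti-diagonal and equal `1` on it, so it is invertible.
-/

open Polynomial

variable {R : Type*}

theorem Polynomial.eval_hasseDeriv_X_pow [Semiring R] (s m : ℕ) (x : R) :
    ((X ^ m : R[X]).hasseDeriv s).eval x = m.choose s * x ^ (m - s) := by
  rw [← monomial_one_right_eq_X_pow, hasseDeriv_monomial, eval_monomial, mul_one]

namespace Matrix

theorem rank_of_eval_hasseDeriv_mul_le [CommSemiring R] [StrongRankCondition R]
    {m n : Type*} [Fintype n] (p : m → R[X]) (q : n → R[X]) (s : ℕ) (x : R) :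
    (of fun j k => ((p j * q k).hasseDeriv s).eval x).rank ≤ s + 1 := by
  let A : Matrix m (Fin (s + 1)) R := of fun j i => ((p j).hasseDeriv i).eval x
  let B : Matrix (Fin (s + 1)) n R := of fun i k => ((q k).hasseDeriv (s - i)).eval x
  have hAB : of (fun j k => ((p j * q k).hasseDeriv s).eval x) = A * B := by
    ext j k
    rw [of_apply, hasseDeriv_mul, eval_finsetSum,
      Finset.Nat.sum_antidiagonal_eq_sum_range_succ_mk, mul_apply, ← Fin.sum_univ_eq_sum_range]
    simp [A, B]
  rw [hAB]
  calc (A * B).rank ≤ A.rank := rank_mul_le_left A B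
    _ ≤ s + 1 := (rank_le_card_width A).trans_eq (Fintype.card_fin _)

theorem IsLowerTriangular.rank_eq_card [CommRing R] [StrongRankCondition R]
    {m : Type*} [Fintype m] [LinearOrder m] {M : Matrix m m R} (hM : M.IsLowerTriangular)
    (hdiag : ∀ i, IsUnit (M i i)) : M.rank = Fintype.card m :=
  M.rank_of_isUnit <| M.isUnit_iff_isUnit_det.2 <| by
    rw [det_of_isLowerTriangular M hM]
    exact IsUnit.prod_univ_iff.2 hdiag

/-- Reversing the columns makes the Hankel matrix lower triangular with `f s` on the diagonal. -/
theorem rank_hankel_of_eq_zero_of_lt [CommRing R] [StrongRankCondition R]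
    (f : ℕ → R) (s : ℕ) (hf : ∀ m < s, f m = 0) (hs : IsUnit (f s)) :
    (of fun i k : Fin (s + 1) => f (i + k)).rank = s + 1 := by
  rw [← rank_submatrix _ (Equiv.refl _) Fin.revPerm]
  refine (IsLowerTriangular.rank_eq_card ?_ fun i => ?_).trans (Fintype.card_fin _)
  · intro i k hik
    have : (i : ℕ) < k := hik
    simp only [submatrix_apply, of_apply, Equiv.refl_apply, Fin.revPerm_apply, Fin.val_rev]
    exact hf _ (by omega)
  · simp only [submatrix_apply, of_apply, Equiv.refl_apply, Fin.revPerm_apply, Fin.val_rev]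
    convert hs using 2
    omega

end Matrix

theorem rank_of_derivative_hankel_matrix_general
    (n : ℕ) (lam : ℂ) (s : ℕ) (hs : s < n)
    (D : Matrix (Fin n) (Fin n) ℂ)
    (hD : ∀ j k : Fin n,
      D j k = (((j : ℕ) + (k : ℕ)).choose s : ℂ) * lam ^ (((j : ℕ) + (k : ℕ)) - s)) :
    D.rank = s + 1 := by
  have hD_eq : D = .of fun j k => ((X ^ (j : ℕ) * X ^ (k : ℕ) : ℂ[X]).hasseDeriv s).eval lam := by
    ext j k
    rw [hD, Matrix.of_apply, ← pow_add, eval_hasseDeriv_X_pow]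
  refine le_antisymm (hD_eq ▸ Matrix.rank_of_eval_hasseDeriv_mul_le _ _ s lam) ?_
  let f : ℕ → ℂ := fun m => m.choose s * lam ^ (m - s)
  have hleading : D.submatrix (Fin.castLE hs) (Fin.castLE hs) = .of fun i k => f (i + k) := by
    ext i k
    rw [Matrix.submatrix_apply, hD, Matrix.of_apply, Fin.val_castLE, Fin.val_castLE]
  have hleading_rank : (D.submatrix (Fin.castLE hs) (Fin.castLE hs)).rank = s + 1 := by
    rw [hleading]
    refine Matrix.rank_hankel_of_eq_zero_of_lt f s (fun m hm => ?_) ?_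
    · simp [f, Nat.choose_eq_zero_of_lt hm]
    · simp [f]
  exact hleading_rank ▸ D.rank_submatrix_le _ _

theorem rank_of_derivative_hankel_matrix
    (n : ℕ) (hn : 1 ≤ n) (lam : ℂ) (s : ℕ) (hs : s < n)
    (D : Matrix (Fin n) (Fin n) ℂ)
    (hD : ∀ j k : Fin n,
      D j k = (((j : ℕ) + (k : ℕ)).choose s : ℂ) * lam ^ (((j : ℕ) + (k : ℕ)) - s)) :
    D.rank = s + 1 :=
  rank_of_derivative_hankel_matrix_general n lam s hs D hD
end

section
/- Let n ≥ 1, let λ ∈ ℂ, and let s', s ∈ ℕ with s' ≤ s < n. For each t ∈ ℕ define the n×n complex matrix D^{(t)} by D^{(t)} j k = ((j + k).choose t) · λ^{(j + k) − t} (natural-number subtraction in the exponent). Then the column space of D^{(s')} is contained in the column space of D^{(s)}; that is, the span of the columns of D^{(s')} (equivalently, the range of the linear map x ↦ D^{(s')} x on ℂ^n) is a subspace of the span of the columns of D^{(s)}. -/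
/-!
Writing `u i` for the vector `(C(j, i) λ^(j - i))_j` of scaled `i`-th derivatives of the powers
`λ^j`, Vandermonde's identity factors `D⁽ᵗ⁾` as `∑_{a + b = t} u a (u b)ᵀ`. Hence every column of
`D⁽ᵗ⁾` lies in the span of `u 0, …, u t`, and conversely, when `t < n`, column `t - i` equals
`u i` plus a combination of `u (i + 1), …, u t`, so by downward induction on `i` the range of
`D⁽ᵗ⁾` is exactly that span, which grows with `t`.
-/

open Finset

theorem Submodule.mem_of_sum_smul_mem {R M ι : Type*} [Ring R] [AddCommGroup M] [Module R M]
    [DecidableEq ι] {S : Submodule R M} {s : Finset ι} {c : ι → R} {u : ι → M} {i : ι}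
    (hi : i ∈ s) (hci : c i = 1) (hrest : ∀ a ∈ s.erase i, c a • u a ∈ S)
    (hsum : ∑ a ∈ s, c a • u a ∈ S) : u i ∈ S := by
  rw [← add_sum_erase s _ hi, hci, one_smul] at hsum
  simpa using S.sub_mem hsum (S.sum_mem hrest)

variable {R : Type*} [CommRing R]

/-- Entry `j` is `(1 / i!) dⁱ/dλⁱ λ^j`. -/
def binomPowVec (n : ℕ) (lam : R) (i : ℕ) : Fin n → R :=
  fun j => ((j : ℕ).choose i : R) * lam ^ ((j : ℕ) - i)

def hankelDeriv (n : ℕ) (lam : R) (t : ℕ) : Matrix (Fin n) (Fin n) R :=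
  Matrix.of fun j k => (((j : ℕ) + k).choose t : R) * lam ^ ((j : ℕ) + k - t)

theorem add_choose_mul_pow_sub (lam : R) (t j k : ℕ) :
    ((j + k).choose t : R) * lam ^ (j + k - t) =
      ∑ a ∈ range (t + 1),
        ((k.choose (t - a) : R) * lam ^ (k - (t - a))) * ((j.choose a : R) * lam ^ (j - a)) := by
  rw [Nat.add_choose_eq, Nat.sum_antidiagonal_eq_sum_range_succ_mk]
  push_cast
  rw [sum_mul]
  refine sum_congr rfl fun a ha => ?_
  rw [mem_range] at ha
  by_cases hja : a ≤ j
  · by_cases hka : t - a ≤ k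
    · rw [show j + k - t = (j - a) + (k - (t - a)) by omega, pow_add]
      ring
    · simp [Nat.choose_eq_zero_of_lt (show k < t - a by omega)]
  · simp [Nat.choose_eq_zero_of_lt (show j < a by omega)]

theorem hankelDeriv_col (n : ℕ) (lam : R) (t : ℕ) (k : Fin n) :
    (hankelDeriv n lam t).col k =
      ∑ a ∈ range (t + 1), binomPowVec n lam (t - a) k • binomPowVec n lam a := by
  ext j
  simp only [Matrix.col_apply, hankelDeriv, Matrix.of_apply, Finset.sum_apply, Pi.smul_apply,
    smul_eq_mul, binomPowVec]
  exact add_choose_mul_pow_sub lam t j k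

theorem range_hankelDeriv_le (n : ℕ) (lam : R) (t : ℕ) :
    LinearMap.range (hankelDeriv n lam t).mulVecLin ≤
      Submodule.span R (binomPowVec n lam '' Set.Iic t) := by
  rw [Matrix.range_mulVecLin, Submodule.span_le]
  rintro _ ⟨k, rfl⟩
  rw [hankelDeriv_col]
  refine Submodule.sum_mem _ fun a ha => Submodule.smul_mem _ _ (Submodule.subset_span ?_)
  exact ⟨a, Nat.lt_succ_iff.mp (mem_range.mp ha), rfl⟩

theorem binomPowVec_mem_range_hankelDeriv {n : ℕ} (lam : R) {t : ℕ} (ht : t < n) {i : ℕ}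
    (hi : i ≤ t) : binomPowVec n lam i ∈ LinearMap.range (hankelDeriv n lam t).mulVecLin := by
  set S := LinearMap.range (hankelDeriv n lam t).mulVecLin
  refine Nat.decreasingInduction (n := t + 1)
    (motive := fun i _ => ∀ j, i ≤ j → j ≤ t → binomPowVec n lam j ∈ S) ?_
    (fun j hj hjt => by omega) (Nat.le_succ_of_le hi) i le_rfl hi
  intro i _ ih j hij hjt
  rcases hij.eq_or_lt with rfl | hij
  · let k : Fin n := ⟨t - i, by omega⟩
    refine Submodule.mem_of_sum_smul_mem (s := range (t + 1))
      (c := fun a => binomPowVec n lam (t - a) k) (mem_range.mpr (by omega)) ?_ ?_ ?_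
    · simp [binomPowVec, k]
    · intro a ha
      obtain ⟨hai, ha⟩ := mem_erase.mp ha
      rcases lt_or_gt_of_ne hai with hlt | hgt
      · simp [binomPowVec, k, Nat.choose_eq_zero_of_lt (show t - i < t - a by omega)]
      · exact S.smul_mem _ (ih a hgt (by simpa [Nat.lt_succ_iff] using ha))
    · rw [← hankelDeriv_col]
      exact (Matrix.range_mulVecLin _).ge (Submodule.subset_span ⟨k, rfl⟩)
  · exact ih j hij hjt

theorem range_hankelDeriv {n : ℕ} (lam : R) {t : ℕ} (ht : t < n) :
    LinearMap.range (hankelDeriv n lam t).mulVecLin =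
      Submodule.span R (binomPowVec n lam '' Set.Iic t) := by
  refine le_antisymm (range_hankelDeriv_le n lam t) (Submodule.span_le.mpr ?_)
  rintro _ ⟨i, hi, rfl⟩
  exact binomPowVec_mem_range_hankelDeriv lam ht hi

theorem range_derivative_hankel_monotone_general
    (n : ℕ) (lam : ℂ) (s' s : ℕ) (hs' : s' ≤ s) (hs : s < n)
    (D : ℕ → Matrix (Fin n) (Fin n) ℂ)
    (hD : ∀ t : ℕ, ∀ j k : Fin n,
      D t j k = (((j : ℕ) + (k : ℕ)).choose t : ℂ) * lam ^ (((j : ℕ) + (k : ℕ)) - t)) :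
    LinearMap.range (D s').mulVecLin ≤ LinearMap.range (D s).mulVecLin := by
  obtain rfl : D = hankelDeriv n lam := funext fun t => Matrix.ext (hD t)
  rw [range_hankelDeriv lam hs]
  exact (range_hankelDeriv_le n lam s').trans
    (Submodule.span_mono (Set.image_mono (Set.Iic_subset_Iic.mpr hs')))

theorem range_derivative_hankel_monotone
    (n : ℕ) (hn : 1 ≤ n) (lam : ℂ) (s' s : ℕ) (hs' : s' ≤ s) (hs : s < n)
    (D : ℕ → Matrix (Fin n) (Fin n) ℂ)
    (hD : ∀ t : ℕ, ∀ j k : Fin n,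
      D t j k = (((j : ℕ) + (k : ℕ)).choose t : ℂ) * lam ^ (((j : ℕ) + (k : ℕ)) - t)) :
    LinearMap.range (D s').mulVecLin ≤ LinearMap.range (D s).mulVecLin :=
  range_derivative_hankel_monotone_general n lam s' s hs' hs D hD
end

section
/- Let n ≥ 1, let G be an n×n complex matrix, let c, x₀ ∈ ℂ^n, and define y : ℕ → ℂ by y(k) = c ⬝ᵥ (G^k *ᵥ x₀). Let H be the n×n Hankel matrix of y, with entries H j k = y(j + k). Then the rank of H is at most the degree of the minimal polynomial of G over ℂ: rank H ≤ (minpoly ℂ G).natDegree. -/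
/-!
Column `k` of `H` is `O *ᵥ (G ^ k *ᵥ x₀)`, where `O` is the matrix with rows `c ᵥ* G ^ j`. Reducing
`X ^ k` modulo the minimal polynomial writes every `G ^ k` as a combination of `G ^ i` with
`i < deg (minpoly G)`, so all columns lie in the image under `O` of a space of at most that
dimension.
-/

open Matrix Module Submodule

theorem IsIntegral.finrank_span_range_pow_le {K A : Type*} [Field K] [Ring A] [Algebra K A]
    {a : A} (ha : IsIntegral K a) :
    finrank K (span K (Set.range (a ^ · : ℕ → A))) ≤ (minpoly K a).natDegree := by
  let lowPowers := fun i : Fin (minpoly K a).natDegree => a ^ (i : ℕ)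
  have hle : span K (Set.range (a ^ · : ℕ → A)) ≤ span K (Set.range lowPowers) :=
    span_le.mpr <| Set.range_subset_iff.mpr fun _ =>
      ha.mem_span_pow ⟨Polynomial.X ^ _, (Polynomial.aeval_X_pow a).symm⟩
  have := Module.Finite.span_of_finite K (Set.finite_range lowPowers)
  exact (finrank_mono hle).trans <| (finrank_range_le_card _).trans_eq (Fintype.card_fin _)

theorem Matrix.finrank_span_range_pow_mulVec_le {ι K : Type*} [Fintype ι] [DecidableEq ι]
    [Field K] (G : Matrix ι ι K) (v : ι → K) :
    finrank K (span K (Set.range fun k : ℕ => G ^ k *ᵥ v)) ≤ (minpoly K G).natDegree := by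
  have hmap : span K (Set.range fun k : ℕ => G ^ k *ᵥ v) =
      (span K (Set.range (G ^ · : ℕ → Matrix ι ι K))).map
        (LinearMap.applyₗ v ∘ₗ toLin'.toLinearMap) := by
    rw [map_span, ← Set.range_comp]
    rfl
  rw [hmap]
  exact (finrank_map_le _ _).trans (Algebra.IsIntegral.isIntegral G).finrank_span_range_pow_le

theorem hankel_rank_le_minpoly_degree_general
    (n : ℕ)
    (G : Matrix (Fin n) (Fin n) ℂ) (c x₀ : Fin n → ℂ)
    (y : ℕ → ℂ) (hy : ∀ k, y k = c ⬝ᵥ ((G ^ k) *ᵥ x₀))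
    (H : Matrix (Fin n) (Fin n) ℂ)
    (hH : ∀ j k : Fin n, H j k = y ((j : ℕ) + (k : ℕ))) :
    H.rank ≤ (minpoly ℂ G).natDegree := by
  let O : Matrix (Fin n) (Fin n) ℂ := Matrix.of fun j : Fin n => c ᵥ* G ^ (j : ℕ)
  have hcol (k : Fin n) : H.col k = O *ᵥ (G ^ (k : ℕ) *ᵥ x₀) := by
    ext j
    rw [col_apply, hH, hy, pow_add, ← mulVec_mulVec, dotProduct_mulVec]
    rfl
  have hspan : span ℂ (Set.range H.col) ≤
      (span ℂ (Set.range fun k : ℕ => G ^ k *ᵥ x₀)).map O.mulVecLin :=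
    span_le.mpr <| Set.range_subset_iff.mpr fun k => ⟨_, subset_span ⟨k, rfl⟩, (hcol k).symm⟩
  calc H.rank = finrank ℂ (span ℂ (Set.range H.col)) := H.rank_eq_finrank_span_cols
    _ ≤ _ := finrank_mono hspan
    _ ≤ _ := finrank_map_le _ _
    _ ≤ _ := G.finrank_span_range_pow_mulVec_le x₀

theorem hankel_rank_le_minpoly_degree
    (n : ℕ) (hn : 1 ≤ n)
    (G : Matrix (Fin n) (Fin n) ℂ) (c x₀ : Fin n → ℂ)
    (y : ℕ → ℂ) (hy : ∀ k, y k = c ⬝ᵥ ((G ^ k) *ᵥ x₀))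
    (H : Matrix (Fin n) (Fin n) ℂ)
    (hH : ∀ j k : Fin n, H j k = y ((j : ℕ) + (k : ℕ))) :
    H.rank ≤ (minpoly ℂ G).natDegree :=
  hankel_rank_le_minpoly_degree_general n G c x₀ y hy H hH
end

section
/- Let A be a d×d complex matrix, G an n×n complex matrix, c, x₀ ∈ ℂ^n, and β, γ ∈ ℂ^d. Define the vector c ⊗ γ ∈ ℂ^{n·d}, indexed by Fin n × Fin d, by (c ⊗ γ)(i, j) = c i · γ j, and similarly x₀ ⊗ β. Define y : ℕ → ℂ by y(k) = (c ⊗ γ) ⬝ᵥ (((1ₙ ⊗ₖ A) + (G ⊗ₖ 1_d))^k *ᵥ (x₀ ⊗ β)). Then for every k ∈ ℕ, y(k) = ∑_{s=0}^{k} (k.choose s) · (c ⬝ᵥ (G^s *ᵥ x₀)) · (γ ⬝ᵥ (A^{k−s} *ᵥ β)). -/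
open Matrix Kronecker Finset

/-! `G ⊗ₖ 1` and `1 ⊗ₖ A` commute, so the binomial theorem expands the `k`-th power of their sum
into the terms `G ^ s ⊗ₖ A ^ (k - s)`; each of these acts factorwise on the product vector
`x₀ ⊗ β`, and pairing with `c ⊗ γ` splits into the network and agent factors. -/

namespace Matrix

variable {R l m n p : Type*}

def kroneckerVec [Mul R] (x : m → R) (y : n → R) : m × n → R :=
  fun ij => x ij.1 * y ij.2

section CommSemiring

variable [CommSemiring R] [Fintype m] [Fintype n]

theorem kroneckerVec_dotProduct_kroneckerVec (u x : m → R) (v y : n → R) :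
    kroneckerVec u v ⬝ᵥ kroneckerVec x y = (u ⬝ᵥ x) * (v ⬝ᵥ y) := by
  simp only [kroneckerVec, dotProduct, Fintype.sum_prod_type, Fintype.sum_mul_sum]
  refine Finset.sum_congr rfl fun i _ => Finset.sum_congr rfl fun j _ => ?_
  ring

theorem kronecker_mulVec_kroneckerVec (M : Matrix l m R) (N : Matrix p n R)
    (x : m → R) (y : n → R) :
    (M ⊗ₖ N) *ᵥ kroneckerVec x y = kroneckerVec (M *ᵥ x) (N *ᵥ y) := by
  ext ⟨i, j⟩
  -- row `(i, j)` of `M ⊗ₖ N` is definitionally `kroneckerVec (M i) (N j)`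
  exact kroneckerVec_dotProduct_kroneckerVec (M i) x (N j) y

variable [DecidableEq m] [DecidableEq n]

theorem kronecker_pow (M : Matrix m m R) (N : Matrix n n R) (k : ℕ) :
    (M ⊗ₖ N) ^ k = (M ^ k) ⊗ₖ (N ^ k) := by
  induction k with
  | zero => simp
  | succ k ih => rw [pow_succ, ih, ← mul_kronecker_mul, pow_succ, pow_succ]

theorem commute_kronecker_one_one_kronecker (G : Matrix m m R) (A : Matrix n n R) :
    Commute (G ⊗ₖ (1 : Matrix n n R)) ((1 : Matrix m m R) ⊗ₖ A) := by
  simp only [Commute, SemiconjBy, ← mul_kronecker_mul, one_mul, mul_one]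

theorem one_kronecker_add_kronecker_one_pow (G : Matrix m m R) (A : Matrix n n R) (k : ℕ) :
    ((1 : Matrix m m R) ⊗ₖ A + G ⊗ₖ (1 : Matrix n n R)) ^ k
      = ∑ s ∈ range (k + 1), k.choose s • ((G ^ s) ⊗ₖ (A ^ (k - s))) := by
  rw [add_comm, (commute_kronecker_one_one_kronecker G A).add_pow]
  refine Finset.sum_congr rfl fun s _ => ?_
  rw [kronecker_pow, kronecker_pow, one_pow, one_pow, ← mul_kronecker_mul, mul_one, one_mul,
    nsmul_eq_mul']

end CommSemiring

end Matrix

theorem network_output_binomial_factorization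
    (n d : ℕ)
    (A : Matrix (Fin d) (Fin d) ℂ) (G : Matrix (Fin n) (Fin n) ℂ)
    (c x₀ : Fin n → ℂ) (β γ : Fin d → ℂ)
    (cγ x₀β : Fin n × Fin d → ℂ)
    (hcγ : ∀ i j, cγ (i, j) = c i * γ j)
    (hx₀β : ∀ i j, x₀β (i, j) = x₀ i * β j)
    (y : ℕ → ℂ)
    (hy : ∀ k, y k = cγ ⬝ᵥ
      ((((1 : Matrix (Fin n) (Fin n) ℂ) ⊗ₖ A + G ⊗ₖ (1 : Matrix (Fin d) (Fin d) ℂ)) ^ k) *ᵥ x₀β)) :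
    ∀ k : ℕ, y k = ∑ s ∈ Finset.range (k + 1),
      (k.choose s : ℂ) * (c ⬝ᵥ ((G ^ s) *ᵥ x₀)) * (γ ⬝ᵥ ((A ^ (k - s)) *ᵥ β)) := by
  have hcγ' : cγ = kroneckerVec c γ := funext fun ⟨i, j⟩ => hcγ i j
  have hx₀β' : x₀β = kroneckerVec x₀ β := funext fun ⟨i, j⟩ => hx₀β i j
  intro k
  rw [hy, hcγ', hx₀β', one_kronecker_add_kronecker_one_pow, sum_mulVec, dotProduct_sum]
  refine Finset.sum_congr rfl fun s _ => ?_
  rw [smul_mulVec, dotProduct_smul, kronecker_mulVec_kroneckerVec,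
    kroneckerVec_dotProduct_kroneckerVec, nsmul_eq_mul, mul_assoc]
end

section
/- Let d ≥ 1, let τ ∈ ℂ with τ ≠ 0, let η : Fin d → ℂ be pairwise distinct (injective) with η i ≠ 0 for every i, let m : Fin d → ℕ satisfy m i ≥ 1 for every i, and for each i let weights ω i s ∈ ℂ be given for s ∈ {0, …, m i − 1} with ω i (m i − 1) ≠ 0. Define y : ℕ → ℂ by y(k) = ∑_{i} ∑_{s=0}^{m i − 1} ω i s · ((k : ℂ) · τ)^s / s! · (η i)^k. Then for every n ≥ ∑_{i} m i, the n×n Hankel matrix H of y, with entries H j k = y(j + k), has rank equal to ∑_{i} m i. -/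
/-!
Expanding `((j + k)τ)ˢ / s!` by the binomial theorem factors the Hankel matrix as `H = Vᵀ B V`,
where `V` is the (scaled) confluent Vandermonde matrix with rows `k ↦ (kτ)ᵃ / a! · ηᵢᵏ` (`a < mᵢ`)
and `B` is block diagonal with anti-triangular Hankel blocks `(ω i (a + b))_{a + b < mᵢ}`,
invertible because `ω i (mᵢ - 1) ≠ 0`. So `rank H = rank V`, and the rows of `V` are independent:
the sequences `k ↦ kᵃ ηᵢᵏ` lie in the generalized eigenspaces of the shift operator for the
distinct eigenvalues `ηᵢ`, hence (as `ηᵢ ≠ 0`) are independent on all of `ℕ`; and they all satisfy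
the linear recurrence with characteristic polynomial `∏ᵢ (X - ηᵢ)^mᵢ` of order `∑ᵢ mᵢ ≤ n`, so
they are determined by their first `n` values.
-/

open Finset Polynomial Module Nat

variable {R : Type*} [CommRing R] {K : Type*} [Field K]

variable (R) in
def seqShift : Module.End R (ℕ → R) := LinearMap.funLeft R R (· + 1)

lemma seqShift_pow_apply (u : ℕ → R) (j k : ℕ) : (seqShift R ^ j) u k = u (k + j) := by
  induction j generalizing u with
  | zero => rfl
  | succ j ih => rw [pow_succ, Module.End.mul_apply, ih]; rfl

lemma sub_smul_seqShift_pow_apply (η : R) (g : ℕ → R) (m : ℕ) :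
    ((seqShift R - η • 1) ^ m) (fun k => g k * η ^ k) =
      fun k => ((fwdDiff 1)^[m] g) k * η ^ (k + m) := by
  induction m generalizing g with
  | zero => rfl
  | succ m ih =>
    have step : (seqShift R - η • 1) (fun k => g k * η ^ k) =
        fun k => (η • fwdDiff 1 g) k * η ^ k := by
      funext k
      simp only [LinearMap.sub_apply, LinearMap.smul_apply, Module.End.one_apply, Pi.sub_apply,
        Pi.smul_apply, smul_eq_mul, fwdDiff, seqShift, LinearMap.funLeft_apply]
      ring
    rw [pow_succ, Module.End.mul_apply, step, ih, fwdDiff_iter_const_smul,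
      Function.iterate_succ_apply]
    funext k
    simp only [Pi.smul_apply, smul_eq_mul]
    ring

lemma fwdDiff_iter_natCast_pow_eq_zero {a n : ℕ} (h : a < n) :
    (fwdDiff 1)^[n] (fun k : ℕ => (k : R) ^ a) = 0 := by
  funext k
  have := congrFun (fwdDiff_iter_pow_eq_zero_of_lt (R := R) h) k
  rw [fwdDiff_iter_eq_sum_shift] at this ⊢
  simpa using this

lemma natCast_pow_mul_pow_mem_genEigenspace (η : R) {a m : ℕ} (h : a < m) :
    (fun k : ℕ => (k : R) ^ a * η ^ k) ∈ (seqShift R).genEigenspace η m := by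
  rw [Module.End.mem_genEigenspace_nat, LinearMap.mem_ker, sub_smul_seqShift_pow_apply,
    fwdDiff_iter_natCast_pow_eq_zero h]
  simp only [Pi.zero_apply, zero_mul]
  rfl

lemma Module.End.aeval_apply_eq_zero_of_mem_genEigenspace {M : Type*} [AddCommGroup M]
    [Module R M] {f : Module.End R M} {μ : R} {m : ℕ} {x : M} (hx : x ∈ f.genEigenspace μ m)
    {p : R[X]} (hp : (X - C μ) ^ m ∣ p) : aeval f p x = 0 := by
  obtain ⟨r, rfl⟩ := hp
  rw [Module.End.mem_genEigenspace_nat, LinearMap.mem_ker] at hx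
  rw [mul_comm, map_mul, Module.End.mul_apply, map_pow, map_sub, aeval_X, aeval_C,
    Module.algebraMap_end_eq_smul_id, ← Module.End.one_eq_id, hx, map_zero]

lemma eq_zero_of_aeval_seqShift_eq_zero {p : R[X]} (hp : p.Monic) {u : ℕ → R}
    (hu : aeval (seqShift R) p u = 0) {n : ℕ} (hn : p.natDegree ≤ n) (h0 : ∀ k < n, u k = 0) :
    u = 0 := by
  have hrec : ∀ k, ∑ j ∈ range (p.natDegree + 1), p.coeff j * u (k + j) = 0 := fun k => by
    simpa [aeval_eq_sum_range, seqShift_pow_apply] using congrFun hu k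
  suffices ∀ k, u k = 0 from funext this
  intro k
  induction k using Nat.strong_induction_on with
  | _ k ih =>
    obtain hk | hk := lt_or_ge k n
    · exact h0 k hk
    obtain ⟨l, rfl⟩ := Nat.exists_eq_add_of_le (hn.trans hk)
    have := hrec l
    rw [sum_range_succ, hp.coeff_natDegree, one_mul,
      sum_eq_zero fun j hj => by rw [ih _ (by simp at hj; omega), mul_zero], zero_add] at this
    rwa [add_comm]

lemma eq_zero_of_forall_sum_mul_natCast_pow_eq_zero [CharZero K] {m : ℕ} {c : Fin m → K}
    (h : ∀ k : ℕ, ∑ a, c a * (k : K) ^ (a : ℕ) = 0) : c = 0 := by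
  set P : K[X] := ∑ a, C (c a) * X ^ (a : ℕ)
  have hP : P = 0 := by
    apply eq_zero_of_infinite_isRoot
    refine Set.infinite_of_injective_forall_mem Nat.cast_injective fun k => ?_
    simpa [P, eval_finsetSum] using h k
  funext a
  simpa [P, coeff_X_pow, Fin.val_inj] using congrArg (coeff · a) hP

theorem linearIndependent_natCast_pow_mul_pow [CharZero K] {ι : Type*} [Fintype ι] {η : ι → K}
    (hη : Function.Injective η) (hη0 : ∀ i, η i ≠ 0) (m : ι → ℕ) :
    LinearIndependent K
      (fun q : Σ i, Fin (m i) => fun k : ℕ => (k : K) ^ (q.2 : ℕ) * η q.1 ^ k) := by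
  rw [Fintype.linearIndependent_iff]
  intro c hc
  set x : ι → ℕ → K := fun i => ∑ a, c ⟨i, a⟩ • fun k : ℕ => (k : K) ^ (a : ℕ) * η i ^ k
  have hx : ∀ i, x i ∈ (seqShift K).genEigenspace (η i) ⊤ := fun i =>
    Submodule.sum_mem _ fun a _ => Submodule.smul_mem _ _ <|
      ((seqShift K).genEigenspace (η i)).monotone le_top
        (natCast_pow_mul_pow_mem_genEigenspace (η i) a.isLt)
  have hx0 : ∀ i, x i = 0 := by
    have := ((seqShift K).independent_genEigenspace ⊤).comp hη
    rw [iSupIndep_iff_finsetSum_eq_zero_imp_eq_zero] at this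
    exact fun i => this univ x (fun i _ => hx i) (by rw [← hc, Fintype.sum_sigma]) i (mem_univ i)
  rintro ⟨i, a⟩
  refine congrFun (eq_zero_of_forall_sum_mul_natCast_pow_eq_zero
    (c := fun a => c ⟨i, a⟩) fun k => ?_) a
  have := congrFun (hx0 i) k
  simp only [x, Finset.sum_apply, Pi.smul_apply, smul_eq_mul, Pi.zero_apply, ← mul_assoc,
    ← Finset.sum_mul] at this
  exact (mul_eq_zero.mp this).resolve_right (pow_ne_zero k (hη0 i))

theorem linearIndependent_natCast_pow_mul_pow_of_sum_le [CharZero K] {ι : Type*} [Fintype ι]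
    {η : ι → K} (hη : Function.Injective η) (hη0 : ∀ i, η i ≠ 0) (m : ι → ℕ) {n : ℕ}
    (hn : ∑ i, m i ≤ n) :
    LinearIndependent K
      (fun q : Σ i, Fin (m i) => fun k : Fin n => (k : K) ^ (q.2 : ℕ) * η q.1 ^ (k : ℕ)) := by
  set p : K[X] := ∏ i, (X - C (η i)) ^ m i
  have hp : p.Monic := monic_prod_of_monic _ _ fun i _ => (monic_X_sub_C _).pow _
  have hpdeg : p.natDegree = ∑ i, m i := by
    rw [natDegree_prod_of_monic _ _ fun i _ => (monic_X_sub_C _).pow _]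
    simp
  have hspan : Submodule.span K (Set.range fun q : Σ i, Fin (m i) =>
      fun k : ℕ => (k : K) ^ (q.2 : ℕ) * η q.1 ^ k) ≤ LinearMap.ker (aeval (seqShift K) p) := by
    rw [Submodule.span_le]
    rintro _ ⟨⟨i, a⟩, rfl⟩
    exact Module.End.aeval_apply_eq_zero_of_mem_genEigenspace
      (natCast_pow_mul_pow_mem_genEigenspace (η i) a.isLt) (dvd_prod_of_mem _ (mem_univ i))
  refine (linearIndependent_natCast_pow_mul_pow hη hη0 m).map
    (f := LinearMap.funLeft K K (Fin.val : Fin n → ℕ)) ?_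
  rw [Submodule.disjoint_def]
  intro u hu hu0
  exact eq_zero_of_aeval_seqShift_eq_zero hp (hspan hu) (hpdeg.trans_le hn) fun k hk =>
    congrFun (LinearMap.mem_ker.mp hu0) ⟨k, hk⟩

lemma add_pow_div_factorial [CharZero K] (u v : K) (s : ℕ) :
    (u + v) ^ s / s ! = ∑ a ∈ range (s + 1), u ^ a / a ! * (v ^ (s - a) / (s - a)!) := by
  rw [add_pow, sum_div]
  refine sum_congr rfl fun a ha => ?_
  have := (factorial_pos s).ne'
  rw [cast_choose K (mem_range_succ_iff.mp ha)]
  field_simp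

namespace Matrix

def truncatedHankel (w : ℕ → R) (m : ℕ) : Matrix (Fin m) (Fin m) R :=
  of fun a b => if (a : ℕ) + b < m then w (a + b) else 0

lemma det_truncatedHankel_ne_zero [IsDomain R] {w : ℕ → R} {m : ℕ} (hw : w (m - 1) ≠ 0) :
    (truncatedHankel w m).det ≠ 0 := by
  set U := (truncatedHankel w m).submatrix id Fin.revPerm
  have hU : U.IsUpperTriangular := by
    intro a b hab
    have := Fin.val_rev b
    simp only [U, truncatedHankel, submatrix_apply, id, of_apply, Fin.revPerm_apply]
    rw [if_neg (by simp only [id] at hab; omega)]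
  have hdiag : ∀ a, U a a = w (m - 1) := by
    intro a
    have := Fin.val_rev a
    simp only [U, truncatedHankel, submatrix_apply, id, of_apply, Fin.revPerm_apply]
    rw [if_pos (by omega)]
    congr 1
    omega
  have : truncatedHankel w m = U.submatrix id Fin.revPerm := by
    ext; simp [U]
  rw [this, det_permute', det_of_isUpperTriangular hU]
  simp only [hdiag, prod_const]
  exact mul_ne_zero ((Units.isUnit _).map (Int.castRingHom R)).ne_zero (pow_ne_zero _ hw)

lemma sum_mul_add_pow_div_factorial_eq_truncatedHankel [CharZero K] (w : ℕ → K) (m : ℕ) (u v : K) :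
    ∑ s ∈ range m, w s * ((u + v) ^ s / s !) =
      ∑ a : Fin m, ∑ b : Fin m, u ^ (a : ℕ) / (a : ℕ)! * truncatedHankel w m a b *
        (v ^ (b : ℕ) / (b : ℕ)!) := by
  set g : ℕ → ℕ → K := fun a b => u ^ a / a ! * w (a + b) * (v ^ b / b !)
  have hdiag : ∀ s, w s * ((u + v) ^ s / s !) = ∑ a ∈ range (s + 1), g a (s - a) := fun s => by
    rw [add_pow_div_factorial, mul_sum]
    refine sum_congr rfl fun a ha => ?_
    simp only [g]
    rw [show a + (s - a) = s by have := mem_range_succ_iff.mp ha; omega]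
    ring
  have hrow : ∀ a (ha : a < m), ∑ b : Fin m, u ^ a / a ! * truncatedHankel w m ⟨a, ha⟩ b *
      (v ^ (b : ℕ) / (b : ℕ)!) = ∑ b ∈ range (m - a), g a b := fun a ha => by
    simp only [truncatedHankel, of_apply]
    rw [Fin.sum_univ_eq_sum_range (fun b => u ^ a / a ! * (if a + b < m then w (a + b) else 0) *
      (v ^ b / b !)) m, ← sum_subset (range_subset_range.mpr (m.sub_le a))]
    · refine sum_congr rfl fun b hb => ?_
      rw [if_pos (by have := mem_range.mp hb; omega)]
    · intro b _ hb
      rw [if_neg (by simp only [mem_range] at hb; omega), mul_zero, zero_mul]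
  simp_rw [hdiag, sum_range_diag_flip]
  rw [← Fin.sum_univ_eq_sum_range]
  exact sum_congr rfl fun a _ => (hrow a a.isLt).symm

lemma rank_mul_eq_left_of_linearIndependent {l ι κ : Type*} [Fintype ι] [Fintype κ]
    (A : Matrix l ι K) {V : Matrix ι κ K} (hV : LinearIndependent K V.row) :
    (A * V).rank = A.rank := by
  have hsurj : LinearMap.range V.mulVecLin = ⊤ := by
    apply Submodule.eq_top_of_finrank_eq
    rw [← rank, hV.rank_matrix, finrank_fintype_fun_eq_card]
  rw [rank, mulVecLin_mul, LinearMap.range_comp_of_range_eq_top _ hsurj, rank]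

lemma blockDiagonal'_mul_apply {ι κ : Type*} [Fintype ι] [DecidableEq ι]
    {ι' : ι → Type*} [∀ i, Fintype (ι' i)]
    (B : ∀ i, Matrix (ι' i) (ι' i) R) (V : Matrix (Σ i, ι' i) κ R) (i : ι) (a : ι' i) (k : κ) :
    (blockDiagonal' B * V) ⟨i, a⟩ k = ∑ b, B i a b * V ⟨i, b⟩ k := by
  rw [mul_apply, Fintype.sum_sigma, sum_eq_single i]
  · simp only [blockDiagonal'_apply_eq]
  · intro i' _ hi'
    simp only [blockDiagonal'_apply_ne B _ _ hi'.symm, zero_mul, sum_const_zero]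
  · simp

lemma transpose_mul_blockDiagonal'_mul_apply {ι κ : Type*} [Fintype ι] [DecidableEq ι]
    {ι' : ι → Type*} [∀ i, Fintype (ι' i)]
    (V : Matrix (Σ i, ι' i) κ R) (B : ∀ i, Matrix (ι' i) (ι' i) R) (j k : κ) :
    (Vᵀ * blockDiagonal' B * V) j k = ∑ i, ∑ a, ∑ b, V ⟨i, a⟩ j * B i a b * V ⟨i, b⟩ k := by
  simp only [Matrix.mul_assoc, mul_apply (M := Vᵀ), transpose_apply, Fintype.sum_sigma,
    blockDiagonal'_mul_apply, mul_sum, mul_assoc]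

def confluentVandermonde {ι : Type*} (τ : K) (η : ι → K) (m : ι → ℕ) (n : ℕ) :
    Matrix (Σ i, Fin (m i)) (Fin n) K :=
  of fun q k => ((k : K) * τ) ^ (q.2 : ℕ) / (q.2 : ℕ)! * η q.1 ^ (k : ℕ)

theorem linearIndependent_row_confluentVandermonde [CharZero K] {ι : Type*} [Fintype ι]
    {τ : K} (hτ : τ ≠ 0) {η : ι → K} (hη : Function.Injective η) (hη0 : ∀ i, η i ≠ 0)
    (m : ι → ℕ) {n : ℕ} (hn : ∑ i, m i ≤ n) :
    LinearIndependent K (confluentVandermonde τ η m n).row := by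
  have hscale : ∀ q : Σ i, Fin (m i), τ ^ (q.2 : ℕ) / (q.2 : ℕ)! ≠ 0 := fun q =>
    div_ne_zero (pow_ne_zero _ hτ) (cast_ne_zero.mpr (factorial_ne_zero _))
  convert (linearIndependent_natCast_pow_mul_pow_of_sum_le hη hη0 m hn).units_smul
    fun q => Units.mk0 _ (hscale q) using 1
  ext q k
  simp only [row, confluentVandermonde, of_apply, Pi.smul_apply', Units.smul_mk0, Pi.smul_apply,
    smul_eq_mul]
  ring

theorem hankel_eq_transpose_confluentVandermonde_mul [CharZero K] {ι : Type*} [Fintype ι]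
    [DecidableEq ι] (τ : K) (η : ι → K) (m : ι → ℕ) (ω : ι → ℕ → K) {n : ℕ}
    (H : Matrix (Fin n) (Fin n) K)
    (hH : ∀ j k : Fin n, H j k = ∑ i, ∑ s ∈ range (m i),
      ω i s * (((j + k : ℕ) : K) * τ) ^ s / (s ! : K) * η i ^ (j + k : ℕ)) :
    H = (confluentVandermonde τ η m n)ᵀ *
      blockDiagonal' (fun i => truncatedHankel (ω i) (m i)) * confluentVandermonde τ η m n := by
  ext j k
  rw [hH, transpose_mul_blockDiagonal'_mul_apply]
  refine sum_congr rfl fun i _ => ?_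
  calc ∑ s ∈ range (m i), ω i s * (((j + k : ℕ) : K) * τ) ^ s / (s ! : K) * η i ^ (j + k : ℕ)
      = (∑ s ∈ range (m i), ω i s * (((j : K) * τ + (k : K) * τ) ^ s / s !)) *
          (η i ^ (j : ℕ) * η i ^ (k : ℕ)) := by
        rw [sum_mul]
        refine sum_congr rfl fun s _ => ?_
        push_cast
        ring
    _ = _ := by
        rw [sum_mul_add_pow_div_factorial_eq_truncatedHankel, sum_mul]
        refine sum_congr rfl fun a _ => ?_
        rw [sum_mul]
        refine sum_congr rfl fun b _ => ?_
        simp only [confluentVandermonde, of_apply]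
        ring

end Matrix

open Matrix

theorem continuous_time_hankel_rank_general
    (d : ℕ) (τ : ℂ) (hτ : τ ≠ 0)
    (η : Fin d → ℂ) (hη : Function.Injective η) (hη0 : ∀ i, η i ≠ 0)
    (m : Fin d → ℕ)
    (ω : Fin d → ℕ → ℂ) (hω : ∀ i, ω i (m i - 1) ≠ 0)
    (y : ℕ → ℂ)
    (hy : ∀ k, y k = ∑ i, ∑ s ∈ Finset.range (m i),
      ω i s * ((k : ℂ) * τ) ^ s / (s.factorial : ℂ) * η i ^ k) :
    ∀ n : ℕ, (∑ i, m i) ≤ n →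
      ∀ H : Matrix (Fin n) (Fin n) ℂ,
        (∀ j k : Fin n, H j k = y ((j : ℕ) + (k : ℕ))) →
        H.rank = ∑ i, m i := by
  intro n hn H hH
  have hV := linearIndependent_row_confluentVandermonde hτ hη hη0 m hn
  have hB : IsUnit (blockDiagonal' fun i => truncatedHankel (ω i) (m i)).det :=
    (isUnit_iff_isUnit_det _).mp <| (Pi.isUnit_iff.mpr fun i =>
      (isUnit_iff_isUnit_det _).mpr (det_truncatedHankel_ne_zero (hω i)).isUnit).map
        (blockDiagonal'RingHom _ ℂ)
  rw [hankel_eq_transpose_confluentVandermonde_mul τ η m ω H fun j k => by rw [hH, hy],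
    rank_mul_eq_left_of_linearIndependent _ hV, rank_mul_eq_left_of_isUnit_det _ _ hB,
    rank_transpose, hV.rank_matrix, Fintype.card_sigma]
  simp

theorem continuous_time_hankel_rank
    (d : ℕ) (hd : 1 ≤ d) (τ : ℂ) (hτ : τ ≠ 0)
    (η : Fin d → ℂ) (hη : Function.Injective η) (hη0 : ∀ i, η i ≠ 0)
    (m : Fin d → ℕ) (hm : ∀ i, 1 ≤ m i)
    (ω : Fin d → ℕ → ℂ) (hω : ∀ i, ω i (m i - 1) ≠ 0)
    (y : ℕ → ℂ)
    (hy : ∀ k, y k = ∑ i, ∑ s ∈ Finset.range (m i),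
      ω i s * ((k : ℂ) * τ) ^ s / (s.factorial : ℂ) * η i ^ k) :
    ∀ n : ℕ, (∑ i, m i) ≤ n →
      ∀ H : Matrix (Fin n) (Fin n) ℂ,
        (∀ j k : Fin n, H j k = y ((j : ℕ) + (k : ℕ))) →
        H.rank = ∑ i, m i :=
  continuous_time_hankel_rank_general d τ hτ η hη hη0 m ω hω y hy
end
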